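/- Let ρ and π be density matrices on ℂ^n with ρ ≠ π and with the range of π contained in the range of ρ. Suppose p > 0 is such that σ := ρ + p·(ρ − π) is positive semidefinite but ρ + q·(ρ − π) is not positive semidefinite for every q > p. Then the range of π is not contained in the range of σ, the range of σ is strictly contained in the range of ρ, and rank σ < rank ρ. -/

import Mathlib

/-!
Since `σ - π = (1 + p) • (ρ - π)`, the inclusion `ran π ⊆ ran σ` would give `ran (ρ - π) ⊆ ran σ`,
hence `ker σ ⊆ ker (ρ - π)`. A positive semidefinite `A` absorbs a small multiple of any Hermitian
`B` with `ker A ⊆ ker B`: in an eigenbasis `A = S * S` with `S` diagonal, `B = S * M * S` for a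
Hermitian `M`, and `A + ε • B = S * (1 + ε • M) * S`. So `σ + ε • (ρ - π)` would stay positive
semidefinite, contradicting the maximality of `p`. The rest is bookkeeping:
`ran σ ⊆ ran ρ + ran π = ran ρ`, and the inclusion is strict because `ran π ⊆ ran ρ`.
-/

open Matrix
open scoped ComplexOrder

/-- A density matrix on ℂ^n: positive semidefinite with trace 1. -/
def IsDensityMatrix {n : ℕ} (ρ : Matrix (Fin n) (Fin n) ℂ) : Prop :=
  ρ.PosSemidef ∧ ρ.trace = 1

/-- The trace distance between two matrices whose difference is Hermitian:
half the sum of the absolute values of the eigenvalues of the difference. -/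
noncomputable def traceDist {n : ℕ} (ρ π : Matrix (Fin n) (Fin n) ℂ) : ℝ :=
  if h : (ρ - π).IsHermitian then (1 / 2) * ∑ i, |h.eigenvalues i| else 0

namespace Matrix

section Range

variable {R : Type*} [CommRing R] {m n : Type*} [Fintype n]

lemma range_mulVecLin_add_le (A B : Matrix m n R) :
    LinearMap.range (A + B).mulVecLin ≤
      LinearMap.range A.mulVecLin ⊔ LinearMap.range B.mulVecLin := by
  rw [mulVecLin_add]
  exact LinearMap.range_add_le _ _

lemma range_mulVecLin_sub_le (A B : Matrix m n R) :
    LinearMap.range (A - B).mulVecLin ≤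
      LinearMap.range A.mulVecLin ⊔ LinearMap.range B.mulVecLin := by
  have : (A - B).mulVecLin = A.mulVecLin + -B.mulVecLin :=
    LinearMap.ext fun _ => by simp [sub_eq_add_neg]
  rw [this, ← LinearMap.range_neg B.mulVecLin]
  exact LinearMap.range_add_le _ _

lemma range_mulVecLin_smul_le (c : R) (A : Matrix m n R) :
    LinearMap.range (c • A).mulVecLin ≤ LinearMap.range A.mulVecLin := by
  have : (c • A).mulVecLin = c • A.mulVecLin := LinearMap.ext fun _ => by simp
  rw [this]
  exact LinearMap.range_smul_le_range _ _

end Range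

section Hermitian

variable {𝕜 : Type*} [RCLike 𝕜] {n : Type*} [Fintype n]

lemma IsHermitian.ker_mulVecLin_le_of_range_le {A B : Matrix n n 𝕜} (hA : A.IsHermitian)
    (hB : B.IsHermitian)
    (h : LinearMap.range B.mulVecLin ≤ LinearMap.range A.mulVecLin) :
    LinearMap.ker A.mulVecLin ≤ LinearMap.ker B.mulVecLin := by
  intro x hx
  rw [LinearMap.mem_ker, mulVecLin_apply] at hx ⊢
  have hxA : star x ᵥ* A = 0 := by
    rw [← hA.eq, ← star_mulVec, hx, star_zero]
  have hxB : ∀ y, star x ⬝ᵥ (B *ᵥ y) = 0 := fun y => by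
    obtain ⟨z, hz⟩ := h (LinearMap.mem_range_self B.mulVecLin y)
    simp only [mulVecLin_apply] at hz
    rw [← hz, dotProduct_mulVec, hxA, zero_dotProduct]
  apply dotProduct_star_self_eq_zero.mp
  rw [star_mulVec, hB.eq, ← dotProduct_mulVec]
  exact hxB _

variable [DecidableEq n]

lemma IsHermitian.exists_pos_posSemidef_one_add_smul {M : Matrix n n 𝕜} (hM : M.IsHermitian) :
    ∃ ε : ℝ, 0 < ε ∧ (1 + (ε : 𝕜) • M).PosSemidef := by
  set ε : ℝ := 1 / (1 + ∑ i, |hM.eigenvalues i|)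
  have hε : 0 < ε := by positivity
  refine ⟨ε, hε, ?_⟩
  have hdiag : 1 + (ε : 𝕜) • M = Unitary.conjStarAlgAut 𝕜 _ hM.eigenvectorUnitary
      (diagonal fun i => ((1 + ε * hM.eigenvalues i : ℝ) : 𝕜)) := by
    conv_lhs => rw [hM.spectral_theorem]
    rw [← map_one (Unitary.conjStarAlgAut 𝕜 _ hM.eigenvectorUnitary), ← map_smul, ← map_add]
    congr 1
    ext i j
    by_cases h : i = j <;> simp [diagonal, h]
  rw [hdiag, Unitary.conjStarAlgAut_apply]
  refine (PosSemidef.diagonal fun i => ?_).mul_mul_conjTranspose_same _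
  have hle : |hM.eigenvalues i| ≤ ∑ j, |hM.eigenvalues j| :=
    Finset.single_le_sum (fun j _ => abs_nonneg (hM.eigenvalues j)) (Finset.mem_univ i)
  have : ε * |hM.eigenvalues i| ≤ 1 := by
    rw [div_mul_eq_mul_div, one_mul, div_le_one (by positivity)]
    linarith
  have := neg_abs_le (hM.eigenvalues i)
  simp only [Pi.zero_apply, RCLike.ofReal_nonneg]
  nlinarith

lemma exists_pos_posSemidef_diagonal_add_smul_of_ker_le {μ : n → ℝ} (hμ : 0 ≤ μ)
    {B : Matrix n n 𝕜} (hB : B.IsHermitian)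
    (hker : LinearMap.ker (diagonal fun i => (μ i : 𝕜)).mulVecLin ≤ LinearMap.ker B.mulVecLin) :
    ∃ ε : ℝ, 0 < ε ∧ (diagonal (fun i => (μ i : 𝕜)) + (ε : 𝕜) • B).PosSemidef := by
  have hcol : ∀ i j, μ j = 0 → B i j = 0 := fun i j hj => by
    have : B *ᵥ Pi.single j 1 = 0 := hker (by simp [hj])
    simpa [mulVec_single] using congrFun this i
  have hrow : ∀ i j, μ i = 0 → B i j = 0 := fun i j hi => by
    rw [← hB.apply, hcol j i hi, star_zero]
  set s : n → 𝕜 := fun i => (√(μ i) : 𝕜)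
  -- `M` is `S⁻¹ * B * S⁻¹` on the support of `μ`; the junk value `x / 0 = 0` occurs only where
  -- `B` vanishes.
  set M : Matrix n n 𝕜 := of fun i j => B i j / (s i * s j)
  have hs : ∀ i, s i * s i = μ i := fun i => by
    simp only [s, ← RCLike.ofReal_mul, Real.mul_self_sqrt (hμ i)]
  have hBM : B = diagonal s * M * diagonal s := by
    ext i j
    rw [mul_diagonal, diagonal_mul]
    by_cases hi : μ i = 0
    · simp [hrow i j hi, s, hi]
    by_cases hj : μ j = 0
    · simp [hcol i j hj, s, hj]
    have : s i * s j ≠ 0 := by simp [s, hi, hj, Real.sqrt_eq_zero (hμ _)]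
    simp only [M, of_apply]
    field_simp
    rw [mul_assoc, mul_div_cancel_right₀ _ this]
  have hM : M.IsHermitian := by
    ext i j
    simp only [M, conjTranspose_apply, of_apply, star_div₀, star_mul', hB.apply, s,
      RCLike.star_def, RCLike.conj_ofReal]
    rw [mul_comm]
  have hD : diagonal (fun i => (μ i : 𝕜)) = diagonal s * 1 * diagonal s := by
    rw [Matrix.mul_one, diagonal_mul_diagonal]
    simp only [hs]
  obtain ⟨ε, hε, hpos⟩ := hM.exists_pos_posSemidef_one_add_smul
  refine ⟨ε, hε, ?_⟩
  have hSs : (diagonal s)ᴴ = diagonal s := by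
    simp [diagonal_conjTranspose, s, Pi.star_def]
  have hfactor : diagonal (fun i => (μ i : 𝕜)) + (ε : 𝕜) • B
      = (diagonal s)ᴴ * (1 + (ε : 𝕜) • M) * diagonal s := by
    rw [hSs, Matrix.mul_add, Matrix.add_mul, Matrix.mul_smul, Matrix.smul_mul, ← hD, ← hBM]
  rw [hfactor]
  exact hpos.conjTranspose_mul_mul_same _

lemma PosSemidef.exists_pos_posSemidef_add_smul_of_ker_le {A B : Matrix n n 𝕜}
    (hA : A.PosSemidef) (hB : B.IsHermitian)
    (hker : LinearMap.ker A.mulVecLin ≤ LinearMap.ker B.mulVecLin) :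
    ∃ ε : ℝ, 0 < ε ∧ (A + (ε : 𝕜) • B).PosSemidef := by
  set U : Matrix n n 𝕜 := (hA.1.eigenvectorUnitary : Matrix n n 𝕜)
  set D : Matrix n n 𝕜 := diagonal fun i => (hA.1.eigenvalues i : 𝕜)
  have hUU : star U * U = 1 := Unitary.coe_star_mul_self _
  have hA' : A = U * D * star U := hA.1.spectral_theorem
  set B' := star U * B * U
  have hker' : LinearMap.ker D.mulVecLin ≤ LinearMap.ker B'.mulVecLin := by
    intro x hx
    rw [LinearMap.mem_ker, mulVecLin_apply] at hx ⊢
    have hAx : A *ᵥ (U *ᵥ x) = 0 := by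
      rw [hA', mulVec_mulVec, Matrix.mul_assoc, Matrix.mul_assoc, hUU, Matrix.mul_one,
        ← mulVec_mulVec, hx, mulVec_zero]
    have hBx : B *ᵥ (U *ᵥ x) = 0 := hker hAx
    rw [← mulVec_mulVec, ← mulVec_mulVec, hBx, mulVec_zero]
  obtain ⟨ε, hε, hpos⟩ := exists_pos_posSemidef_diagonal_add_smul_of_ker_le
    (fun i => hA.eigenvalues_nonneg i) (isHermitian_conjTranspose_mul_mul U hB) hker'
  refine ⟨ε, hε, ?_⟩
  have hconj : A + (ε : 𝕜) • B = U * (D + (ε : 𝕜) • B') * star U := by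
    have hUU' : U * star U = 1 := Unitary.coe_mul_star_self _
    rw [Matrix.mul_add, Matrix.add_mul, ← hA', Matrix.mul_smul, Matrix.smul_mul]
    simp only [B', ← Matrix.mul_assoc, hUU', Matrix.one_mul]
    rw [Matrix.mul_assoc, hUU', Matrix.mul_one]
  rw [hconj]
  exact hpos.mul_mul_conjTranspose_same U

end Hermitian

end Matrix

theorem stmt_7_general {n : ℕ} (ρ π : Matrix (Fin n) (Fin n) ℂ)
    (hρ : IsDensityMatrix ρ) (hπ : IsDensityMatrix π)
    (hrange : LinearMap.range π.mulVecLin ≤ LinearMap.range ρ.mulVecLin)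
    (p : ℝ) (hp : 0 < p)
    (hpos : (ρ + ((p : ℝ) : ℂ) • (ρ - π)).PosSemidef)
    (hmax : ∀ q : ℝ, p < q → ¬ (ρ + ((q : ℝ) : ℂ) • (ρ - π)).PosSemidef) :
    ¬ (LinearMap.range π.mulVecLin ≤
        LinearMap.range (ρ + ((p : ℝ) : ℂ) • (ρ - π)).mulVecLin) ∧
    LinearMap.range (ρ + ((p : ℝ) : ℂ) • (ρ - π)).mulVecLin <
      LinearMap.range ρ.mulVecLin ∧
    (ρ + ((p : ℝ) : ℂ) • (ρ - π)).rank < ρ.rank := by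
  set σ := ρ + ((p : ℝ) : ℂ) • (ρ - π) with hσ
  have hherm : (ρ - π).IsHermitian := hρ.1.1.sub hπ.1.1
  have hσρ : LinearMap.range σ.mulVecLin ≤ LinearMap.range ρ.mulVecLin :=
    (range_mulVecLin_add_le _ _).trans <| sup_le le_rfl <| (range_mulVecLin_smul_le _ _).trans <|
      (range_mulVecLin_sub_le _ _).trans (sup_le le_rfl hrange)
  have hπσ : ¬ LinearMap.range π.mulVecLin ≤ LinearMap.range σ.mulVecLin := by
    intro hπσ
    have hdiff : ρ - π = ((1 + p : ℝ) : ℂ)⁻¹ • (σ - π) := by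
      have : ((1 + p : ℝ) : ℂ) ≠ 0 := Complex.ofReal_ne_zero.mpr (by linarith)
      rw [eq_inv_smul_iff₀ this, hσ]
      push_cast
      module
    have hker : LinearMap.ker σ.mulVecLin ≤ LinearMap.ker (ρ - π).mulVecLin := by
      refine hpos.1.ker_mulVecLin_le_of_range_le hherm ?_
      rw [hdiff]
      exact (range_mulVecLin_smul_le _ _).trans <|
        (range_mulVecLin_sub_le _ _).trans (sup_le le_rfl hπσ)
    obtain ⟨ε, hε, hεpos⟩ := hpos.exists_pos_posSemidef_add_smul_of_ker_le hherm hker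
    refine hmax (p + ε) (by linarith) ?_
    have hshift : ρ + ((p + ε : ℝ) : ℂ) • (ρ - π) = σ + (ε : ℂ) • (ρ - π) := by
      rw [hσ]
      push_cast
      module
    rw [hshift]
    exact hεpos
  have hlt : LinearMap.range σ.mulVecLin < LinearMap.range ρ.mulVecLin :=
    lt_of_le_of_ne hσρ fun h => hπσ (h ▸ hrange)
  exact ⟨hπσ, hlt, Submodule.finrank_lt_finrank_of_lt hlt⟩

theorem stmt_7 {n : ℕ} (ρ π : Matrix (Fin n) (Fin n) ℂ)
    (hρ : IsDensityMatrix ρ) (hπ : IsDensityMatrix π) (hne : ρ ≠ π)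
    (hrange : LinearMap.range π.mulVecLin ≤ LinearMap.range ρ.mulVecLin)
    (p : ℝ) (hp : 0 < p)
    (hpos : (ρ + ((p : ℝ) : ℂ) • (ρ - π)).PosSemidef)
    (hmax : ∀ q : ℝ, p < q → ¬ (ρ + ((q : ℝ) : ℂ) • (ρ - π)).PosSemidef) :
    ¬ (LinearMap.range π.mulVecLin ≤
        LinearMap.range (ρ + ((p : ℝ) : ℂ) • (ρ - π)).mulVecLin) ∧
    LinearMap.range (ρ + ((p : ℝ) : ℂ) • (ρ - π)).mulVecLin <
      LinearMap.range ρ.mulVecLin ∧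
    (ρ + ((p : ℝ) : ℂ) • (ρ - π)).rank < ρ.rank :=
  stmt_7_general ρ π hρ hπ hrange p hp hpos hmax
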